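/- arXiv:1401.6326 — 2 statements merged into one kernel-verified Lean document; each statement's English description precedes it below -/
import Mathlib

section
/- Let X, b, v be smooth divergence-free vector fields on ℝ², ω = curl v, j = curl b. Then at every point x with X(x) ≠ 0: ∂₁b·∇v² − ∂₂b·∇v¹ = (2/|X|²)(∂_X b¹ ∂_X v² − ∂_X b² ∂_X v¹) + (1/|X|²)(j X·∂_X v − ω X·∂_X b), provided the Biot–Savart relations ∇v = (∇∇⊥Δ⁻¹)ω and ∇b = (∇∇⊥Δ⁻¹)j hold, so that the second-derivative identities |X|² Rᵢⱼω can be expressed via ∂_X v and ω (and similarly for b). -/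
noncomputable def pd1 (f : ℝ × ℝ → ℝ) (x : ℝ × ℝ) : ℝ := fderiv ℝ f x (1, 0)
noncomputable def pd2 (f : ℝ × ℝ → ℝ) (x : ℝ × ℝ) : ℝ := fderiv ℝ f x (0, 1)

/-- Directional derivative along the vector field `X`. -/
noncomputable def pdX (X : ℝ × ℝ → ℝ × ℝ) (f : ℝ × ℝ → ℝ) (x : ℝ × ℝ) : ℝ :=
  (X x).1 * pd1 f x + (X x).2 * pd2 f x

/-- `∇⊥f = (−∂₂f, ∂₁f)`. -/
noncomputable def perpGrad (f : ℝ × ℝ → ℝ) (x : ℝ × ℝ) : ℝ × ℝ :=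
  (-pd2 f x, pd1 f x)

lemma pd1_neg (f : ℝ × ℝ → ℝ) (x : ℝ × ℝ) : pd1 (fun y => -(f y)) x = -(pd1 f x) := by
  unfold pd1; rw [fderiv_fun_neg]; rfl

lemma pd2_neg (f : ℝ × ℝ → ℝ) (x : ℝ × ℝ) : pd2 (fun y => -(f y)) x = -(pd2 f x) := by
  unfold pd2; rw [fderiv_fun_neg]; rfl

lemma fderiv_eval (ψ : ℝ × ℝ → ℝ) (hψ : ContDiff ℝ (⊤ : ℕ∞) ψ) (v u x : ℝ × ℝ) :
    fderiv ℝ (fun y => fderiv ℝ ψ y v) x u = fderiv ℝ (fderiv ℝ ψ) x u v := by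
  have h1 : DifferentiableAt ℝ (fderiv ℝ ψ) x :=
    ((hψ.fderiv_right (m := 1) (by exact WithTop.coe_le_coe.mpr (le_top : ((1 + 1 : ℕ) : ℕ∞) ≤ ⊤))).differentiable one_ne_zero) x
  rw [fderiv_clm_apply h1 (differentiableAt_const v)]
  simp

lemma pd_symm (ψ : ℝ × ℝ → ℝ) (hψ : ContDiff ℝ (⊤ : ℕ∞) ψ) (x : ℝ × ℝ) :
    pd1 (pd2 ψ) x = pd2 (pd1 ψ) x := by
  have h1 : DifferentiableAt ℝ (fderiv ℝ ψ) x :=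
    ((hψ.fderiv_right (m := 1) (by exact WithTop.coe_le_coe.mpr (le_top : ((1 + 1 : ℕ) : ℕ∞) ≤ ⊤))).differentiable one_ne_zero) x
  unfold pd1 pd2
  rw [fderiv_eval ψ hψ, fderiv_eval ψ hψ]
  exact second_derivative_symmetric
    (fun y => ((hψ.differentiable (by simp)) y).hasFDerivAt) h1.hasFDerivAt _ _

/-- Let `X, b, v` be smooth divergence-free vector fields on `ℝ²`, with the
Biot–Savart structure `v = ∇⊥ψv`, `b = ∇⊥ψb`, `ω = curl v = Δψv`, `j = curl b = Δψb`.
Then at every point `x` with `X(x) ≠ 0`: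
`∂₁b·∇v² − ∂₂b·∇v¹ = (2/|X|²)(∂_X b¹ ∂_X v² − ∂_X b² ∂_X v¹)
  + (1/|X|²)(j X·∂_X v − ω X·∂_X b)`. -/
theorem stmt9 (X : ℝ × ℝ → ℝ × ℝ) (ψv ψb : ℝ × ℝ → ℝ)
    (hX : ContDiff ℝ (⊤ : ℕ∞) X) (hψv : ContDiff ℝ (⊤ : ℕ∞) ψv) (hψb : ContDiff ℝ (⊤ : ℕ∞) ψb)
    (hdivX : ∀ x, pd1 (fun y => (X y).1) x + pd2 (fun y => (X y).2) x = 0)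
    (v b : ℝ × ℝ → ℝ × ℝ) (ω j : ℝ × ℝ → ℝ)
    (hv : v = perpGrad ψv) (hb : b = perpGrad ψb)
    (hω : ω = fun x => pd1 (pd1 ψv) x + pd2 (pd2 ψv) x)
    (hj : j = fun x => pd1 (pd1 ψb) x + pd2 (pd2 ψb) x)
    (x : ℝ × ℝ) (hx : X x ≠ 0) :
    (pd1 (fun y => (b y).1) x * pd1 (fun y => (v y).2) x
        + pd1 (fun y => (b y).2) x * pd2 (fun y => (v y).2) x)
      - (pd2 (fun y => (b y).1) x * pd1 (fun y => (v y).1) x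
        + pd2 (fun y => (b y).2) x * pd2 (fun y => (v y).1) x)
    = (2 / ((X x).1 ^ 2 + (X x).2 ^ 2)) *
        (pdX X (fun y => (b y).1) x * pdX X (fun y => (v y).2) x
          - pdX X (fun y => (b y).2) x * pdX X (fun y => (v y).1) x)
      + (1 / ((X x).1 ^ 2 + (X x).2 ^ 2)) *
        (j x * ((X x).1 * pdX X (fun y => (v y).1) x
              + (X x).2 * pdX X (fun y => (v y).2) x)
          - ω x * ((X x).1 * pdX X (fun y => (b y).1) x
              + (X x).2 * pdX X (fun y => (b y).2) x)) := by
  subst hv hb hω hj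
  have hs : (X x).1 ^ 2 + (X x).2 ^ 2 ≠ 0 := by
    intro h
    apply hx
    have h1 : (X x).1 = 0 := by nlinarith [sq_nonneg (X x).1, sq_nonneg (X x).2]
    have h2 : (X x).2 = 0 := by nlinarith [sq_nonneg (X x).1, sq_nonneg (X x).2]
    exact Prod.ext h1 h2
  simp only [perpGrad, pdX]
  rw [show (fun y => ((-pd2 ψv y, pd1 ψv y) : ℝ × ℝ).1) = fun y => -(pd2 ψv y) from rfl,
      show (fun y => ((-pd2 ψv y, pd1 ψv y) : ℝ × ℝ).2) = pd1 ψv from rfl,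
      show (fun y => ((-pd2 ψb y, pd1 ψb y) : ℝ × ℝ).1) = fun y => -(pd2 ψb y) from rfl,
      show (fun y => ((-pd2 ψb y, pd1 ψb y) : ℝ × ℝ).2) = pd1 ψb from rfl,
      pd1_neg, pd2_neg, pd1_neg, pd2_neg,
      pd_symm ψv hψv, pd_symm ψb hψb]
  set p := (X x).1
  set q := (X x).2
  set a := pd1 (pd1 ψv) x
  set c := pd2 (pd1 ψv) x
  set d := pd2 (pd2 ψv) x
  set A := pd1 (pd1 ψb) x
  set C := pd2 (pd1 ψb) x
  set D := pd2 (pd2 ψb) x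
  field_simp
  ring
end

section
/- Let f, g : ℝ → ℝ be Lipschitz functions and define v₀(x) = f(|x|) x⊥ and b₀(x) = g(|x|) x⊥ on ℝ², where x⊥ = (−x₂, x₁). Then ∂₁b₀·∇v₀² − ∂₂b₀·∇v₀¹ = 0 in the distributional sense; equivalently div(v₀² ∂₁b₀ − v₀¹ ∂₂b₀) = 0. -/
open MeasureTheory

/-- Euclidean norm on `ℝ × ℝ`. -/
noncomputable def enorm2 (x : ℝ × ℝ) : ℝ := Real.sqrt (x.1 ^ 2 + x.2 ^ 2)

namespace Stmt14Aux

open Real Set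

/-! ### Rotations -/

noncomputable def rot (θ : ℝ) : (ℝ × ℝ) →L[ℝ] (ℝ × ℝ) :=
  ((Real.cos θ) • (ContinuousLinearMap.fst ℝ ℝ ℝ) -
      (Real.sin θ) • (ContinuousLinearMap.snd ℝ ℝ ℝ)).prod
    ((Real.sin θ) • (ContinuousLinearMap.fst ℝ ℝ ℝ) +
      (Real.cos θ) • (ContinuousLinearMap.snd ℝ ℝ ℝ))

@[simp] lemma rot_apply (θ : ℝ) (x : ℝ × ℝ) :
    rot θ x = (Real.cos θ * x.1 - Real.sin θ * x.2, Real.sin θ * x.1 + Real.cos θ * x.2) := by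
  simp [rot, smul_eq_mul]

lemma rot_rot (θ : ℝ) (x : ℝ × ℝ) : rot (-θ) (rot θ x) = x := by
  have h := sin_sq_add_cos_sq θ
  simp only [rot_apply, cos_neg, sin_neg]
  ext
  · dsimp; linear_combination x.1 * h
  · dsimp; linear_combination x.2 * h

lemma rot_rot' (θ : ℝ) (x : ℝ × ℝ) : rot θ (rot (-θ) x) = x := by
  have := rot_rot (-θ) x; rwa [neg_neg] at this

lemma enorm2_rot (θ : ℝ) (x : ℝ × ℝ) : enorm2 (rot θ x) = enorm2 x := by
  have h := sin_sq_add_cos_sq θ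
  simp only [enorm2, rot_apply]
  congr 1
  nlinarith

/-! ### The field `B g` and its equivariance -/

noncomputable def B (g : ℝ → ℝ) (x : ℝ × ℝ) : ℝ × ℝ :=
  (g (enorm2 x) * (-x.2), g (enorm2 x) * x.1)

lemma B_rot (g : ℝ → ℝ) (θ : ℝ) (x : ℝ × ℝ) : B g (rot θ x) = rot θ (B g x) := by
  unfold B
  rw [enorm2_rot]
  simp only [rot_apply]
  ext <;> dsimp <;> ring

lemma diff_B_rot {g : ℝ → ℝ} {x : ℝ × ℝ} (θ : ℝ)
    (h : DifferentiableAt ℝ (B g) x) : DifferentiableAt ℝ (B g) (rot θ x) := by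
  have hx : DifferentiableAt ℝ (B g) (rot (-θ) (rot θ x)) := by rwa [rot_rot]
  have hcomp : DifferentiableAt ℝ (fun y => rot θ (B g (rot (-θ) y))) (rot θ x) :=
    ((rot θ).differentiableAt).comp _ (hx.comp _ ((rot (-θ)).differentiableAt))
  have he : (fun y => rot θ (B g (rot (-θ) y))) = B g :=
    funext fun y => by rw [← B_rot, rot_rot']
  rwa [he] at hcomp

lemma fderiv_B_rot (g : ℝ → ℝ) (θ : ℝ) (x v : ℝ × ℝ) :
    fderiv ℝ (B g) (rot θ x) (rot θ v) = rot θ (fderiv ℝ (B g) x v) := by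
  by_cases h : DifferentiableAt ℝ (B g) x
  · set D := fderiv ℝ (B g) x with hD
    have hd' : HasFDerivAt (B g) D (rot (-θ) (rot θ x)) := by
      rw [rot_rot]; exact h.hasFDerivAt
    have h1 : HasFDerivAt (B g ∘ (rot (-θ))) (D.comp (rot (-θ))) (rot θ x) :=
      hd'.comp _ ((rot (-θ)).hasFDerivAt)
    have h2 : HasFDerivAt (⇑(rot θ) ∘ (B g ∘ (rot (-θ))))
        (((rot θ).comp D).comp (rot (-θ))) (rot θ x) :=
      ((rot θ).hasFDerivAt).comp _ h1
    have h3 : HasFDerivAt (B g) (((rot θ).comp D).comp (rot (-θ))) (rot θ x) := by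
      have he : (⇑(rot θ) ∘ (B g ∘ (rot (-θ)))) = B g := by
        funext y; simp only [Function.comp]; rw [← B_rot, rot_rot']
      rwa [he] at h2
    rw [h3.fderiv]
    simp only [ContinuousLinearMap.coe_comp', Function.comp_apply, rot_rot]
  · have h2 : ¬ DifferentiableAt ℝ (B g) (rot θ x) := by
      intro hc
      have := diff_B_rot (-θ) hc
      rw [rot_rot] at this
      exact h this
    rw [fderiv_zero_of_not_differentiableAt h, fderiv_zero_of_not_differentiableAt h2]
    simp
    rfl

/-! ### The combined field `Fv` -/

noncomputable def Fv (f g : ℝ → ℝ) (x : ℝ × ℝ) : ℝ × ℝ :=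
  f (enorm2 x) • (fderiv ℝ (B g) x x)

lemma Fv_rot (f g : ℝ → ℝ) (θ : ℝ) (x : ℝ × ℝ) :
    Fv f g (rot θ x) = rot θ (Fv f g x) := by
  unfold Fv
  rw [enorm2_rot, fderiv_B_rot, _root_.map_smul]

lemma fderiv_B_dot (g : ℝ → ℝ) (x : ℝ × ℝ) :
    (fderiv ℝ (B g) x x).1 * x.1 + (fderiv ℝ (B g) x x).2 * x.2 = 0 := by
  by_cases h : DifferentiableAt ℝ (B g) x
  · have hline : HasDerivAt (fun t : ℝ => t • x) x 1 := by
      simpa using (hasDerivAt_id (1:ℝ)).smul_const x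
    have h' : HasFDerivAt (B g) (fderiv ℝ (B g) x) ((fun t : ℝ => t • x) 1) := by
      simpa [one_smul] using h.hasFDerivAt
    have hB : HasDerivAt (fun t : ℝ => B g (t • x)) (fderiv ℝ (B g) x x) 1 := by
      exact h'.comp_hasDerivAt 1 hline
    have hB1 : HasDerivAt (fun t : ℝ => (B g (t • x)).1) ((fderiv ℝ (B g) x x).1) 1 := hB.fst
    have hB2 : HasDerivAt (fun t : ℝ => (B g (t • x)).2) ((fderiv ℝ (B g) x x).2) 1 := hB.snd
    have hm1 : HasDerivAt (fun t : ℝ => t * x.1) x.1 1 := by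
      simpa using (hasDerivAt_id (1:ℝ)).mul_const x.1
    have hm2 : HasDerivAt (fun t : ℝ => t * x.2) x.2 1 := by
      simpa using (hasDerivAt_id (1:ℝ)).mul_const x.2
    have hφ : HasDerivAt
        (fun t : ℝ => (B g (t • x)).1 * (t * x.1) + (B g (t • x)).2 * (t * x.2))
        ((fderiv ℝ (B g) x x).1 * (1 * x.1) + (B g ((1:ℝ) • x)).1 * x.1
          + ((fderiv ℝ (B g) x x).2 * (1 * x.2) + (B g ((1:ℝ) • x)).2 * x.2)) 1 :=
      (hB1.mul hm1).add (hB2.mul hm2)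
    have hzero : (fun t : ℝ => (B g (t • x)).1 * (t * x.1) + (B g (t • x)).2 * (t * x.2))
        = fun _ => (0:ℝ) := by
      funext t
      simp only [B, Prod.smul_fst, Prod.smul_snd, smul_eq_mul]
      ring
    have h0 : HasDerivAt (fun t : ℝ => (B g (t • x)).1 * (t * x.1)
        + (B g (t • x)).2 * (t * x.2)) 0 1 := by
      rw [hzero]; exact hasDerivAt_const 1 0
    have huniq := hφ.unique h0
    have hBx : (B g x).1 * x.1 + (B g x).2 * x.2 = 0 := by
      simp only [B]; ring
    rw [one_smul] at huniq
    rw [one_mul, one_mul] at huniq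
    linarith
  · simp [fderiv_zero_of_not_differentiableAt h]

lemma Fv_dot (f g : ℝ → ℝ) (x : ℝ × ℝ) :
    (Fv f g x).1 * x.1 + (Fv f g x).2 * x.2 = 0 := by
  have h := fderiv_B_dot g x
  simp only [Fv, Prod.smul_fst, Prod.smul_snd, smul_eq_mul]
  linear_combination f (enorm2 x) * h

/-! ### Elementary estimates for `enorm2` -/

lemma abs_fst_le_enorm2 (x : ℝ × ℝ) : |x.1| ≤ enorm2 x := by
  rw [enorm2, ← Real.sqrt_sq_eq_abs]
  exact Real.sqrt_le_sqrt (by nlinarith [sq_nonneg x.2])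

lemma abs_snd_le_enorm2 (x : ℝ × ℝ) : |x.2| ≤ enorm2 x := by
  rw [enorm2, ← Real.sqrt_sq_eq_abs]
  exact Real.sqrt_le_sqrt (by nlinarith [sq_nonneg x.1])

lemma enorm2_nonneg (x : ℝ × ℝ) : 0 ≤ enorm2 x := Real.sqrt_nonneg _

lemma enorm2_le (x : ℝ × ℝ) : enorm2 x ≤ |x.1| + |x.2| := by
  have h : x.1 ^ 2 + x.2 ^ 2 ≤ (|x.1| + |x.2|) ^ 2 := by
    nlinarith [abs_nonneg x.1, abs_nonneg x.2, sq_abs x.1, sq_abs x.2]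
  calc enorm2 x ≤ Real.sqrt ((|x.1| + |x.2|) ^ 2) := Real.sqrt_le_sqrt h
    _ = |x.1| + |x.2| := Real.sqrt_sq (by positivity)

lemma enorm2_sub_le (x y : ℝ × ℝ) :
    |enorm2 x - enorm2 y| ≤ |x.1 - y.1| + |x.2 - y.2| := by
  have aux : ∀ a b : ℝ × ℝ, enorm2 a ≤ enorm2 b + (|a.1 - b.1| + |a.2 - b.2|) := by
    intro a b
    have h1 : |b.1| ≤ enorm2 b := abs_fst_le_enorm2 b
    have h2 : |b.2| ≤ enorm2 b := abs_snd_le_enorm2 b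
    have h0 : 0 ≤ enorm2 b := enorm2_nonneg b
    have he : enorm2 b ^ 2 = b.1 ^ 2 + b.2 ^ 2 := Real.sq_sqrt (by positivity)
    have hgoal : a.1 ^ 2 + a.2 ^ 2 ≤ (enorm2 b + (|a.1 - b.1| + |a.2 - b.2|)) ^ 2 := by
      nlinarith [le_abs_self (b.1 * (a.1 - b.1)), abs_mul b.1 (a.1 - b.1),
        le_abs_self (b.2 * (a.2 - b.2)), abs_mul b.2 (a.2 - b.2),
        mul_le_mul_of_nonneg_right h1 (abs_nonneg (a.1 - b.1)),
        mul_le_mul_of_nonneg_right h2 (abs_nonneg (a.2 - b.2)),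
        abs_nonneg (a.1 - b.1), abs_nonneg (a.2 - b.2),
        mul_nonneg (abs_nonneg (a.1 - b.1)) (abs_nonneg (a.2 - b.2)),
        sq_abs (a.1 - b.1), sq_abs (a.2 - b.2)]
    calc enorm2 a = Real.sqrt (a.1 ^ 2 + a.2 ^ 2) := rfl
      _ ≤ Real.sqrt ((enorm2 b + (|a.1 - b.1| + |a.2 - b.2|)) ^ 2) := Real.sqrt_le_sqrt hgoal
      _ = enorm2 b + (|a.1 - b.1| + |a.2 - b.2|) := Real.sqrt_sq (by positivity)
  rw [abs_sub_le_iff]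
  constructor
  · linarith [aux x y]
  · have := aux y x
    rw [abs_sub_comm y.1 x.1, abs_sub_comm y.2 x.2] at this
    linarith

/-! ### Local Lipschitz estimate for `B g` and bound for `Fv` -/

lemma abs_g_le {g : ℝ → ℝ} {Kg : NNReal} (hg : LipschitzWith Kg g) (t : ℝ) :
    |g t| ≤ |g 0| + Kg * |t| := by
  have h := hg.dist_le_mul t 0
  rw [Real.dist_eq, Real.dist_eq, sub_zero] at h
  calc |g t| ≤ |g t - g 0| + |g 0| := by
        have := abs_sub_abs_le_abs_sub (g t) (g 0); linarith [abs_sub (g t) (g 0)]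
    _ ≤ Kg * |t| + |g 0| := by linarith
    _ = |g 0| + Kg * |t| := by ring

lemma B_lipschitzOnWith {g : ℝ → ℝ} {Kg : NNReal} (hg : LipschitzWith Kg g)
    {R : ℝ} (hR : 0 ≤ R) :
    LipschitzOnWith (|g 0| + 4 * Kg * R).toNNReal (B g) (Metric.closedBall 0 R) := by
  apply LipschitzOnWith.of_dist_le_mul
  intro x hx y hy
  rw [Metric.mem_closedBall, dist_zero_right, Prod.norm_def] at hx hy
  have hx1 : |x.1| ≤ R := le_trans (le_max_left _ _) (by simpa [Real.norm_eq_abs] using hx)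
  have hx2 : |x.2| ≤ R := le_trans (le_max_right _ _) (by simpa [Real.norm_eq_abs] using hx)
  have hy1 : |y.1| ≤ R := le_trans (le_max_left _ _) (by simpa [Real.norm_eq_abs] using hy)
  have hy2 : |y.2| ≤ R := le_trans (le_max_right _ _) (by simpa [Real.norm_eq_abs] using hy)
  have hd : dist x y = max |x.1 - y.1| |x.2 - y.2| := by
    rw [Prod.dist_eq, Real.dist_eq, Real.dist_eq]
  have hd1 : |x.1 - y.1| ≤ dist x y := hd ▸ le_max_left _ _
  have hd2 : |x.2 - y.2| ≤ dist x y := hd ▸ le_max_right _ _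
  have hdnn : 0 ≤ dist x y := dist_nonneg
  have hge : |g (enorm2 x) - g (enorm2 y)| ≤ Kg * (2 * dist x y) := by
    have h1 := hg.dist_le_mul (enorm2 x) (enorm2 y)
    rw [Real.dist_eq, Real.dist_eq] at h1
    have h2 := enorm2_sub_le x y
    calc |g (enorm2 x) - g (enorm2 y)| ≤ Kg * |enorm2 x - enorm2 y| := h1
      _ ≤ Kg * (2 * dist x y) := by
          apply mul_le_mul_of_nonneg_left _ (NNReal.coe_nonneg Kg)
          linarith
  have hgy : |g (enorm2 y)| ≤ |g 0| + Kg * (2 * R) := by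
    have h1 := abs_g_le hg (enorm2 y)
    have h2 : |enorm2 y| ≤ 2 * R := by
      rw [abs_of_nonneg (enorm2_nonneg y)]
      linarith [enorm2_le y]
    calc |g (enorm2 y)| ≤ |g 0| + Kg * |enorm2 y| := h1
      _ ≤ |g 0| + Kg * (2 * R) := by
          have := mul_le_mul_of_nonneg_left h2 (NNReal.coe_nonneg Kg); linarith
  have key : ∀ a b : ℝ, |a| ≤ R → |a - b| ≤ dist x y →
      |g (enorm2 x) * a - g (enorm2 y) * b| ≤ (|g 0| + 4 * Kg * R) * dist x y := by
    intro a b ha hab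
    have expand : g (enorm2 x) * a - g (enorm2 y) * b
        = (g (enorm2 x) - g (enorm2 y)) * a + g (enorm2 y) * (a - b) := by ring
    rw [expand]
    calc |(g (enorm2 x) - g (enorm2 y)) * a + g (enorm2 y) * (a - b)|
        ≤ |(g (enorm2 x) - g (enorm2 y)) * a| + |g (enorm2 y) * (a - b)| := abs_add_le _ _
      _ = |g (enorm2 x) - g (enorm2 y)| * |a| + |g (enorm2 y)| * |a - b| := by
          rw [abs_mul, abs_mul]
      _ ≤ (Kg * (2 * dist x y)) * R + (|g 0| + Kg * (2 * R)) * dist x y := by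
          apply add_le_add
          · apply mul_le_mul hge ha (abs_nonneg _) (by positivity)
          · apply mul_le_mul hgy hab (abs_nonneg _) (by positivity)
      _ ≤ (|g 0| + 4 * Kg * R) * dist x y := by ring_nf; nlinarith [NNReal.coe_nonneg Kg]
  have hC : (0:ℝ) ≤ |g 0| + 4 * Kg * R := by positivity
  rw [Real.coe_toNNReal _ hC, Prod.dist_eq]
  apply max_le
  · rw [Real.dist_eq]
    simp only [B]
    exact key (-x.2) (-y.2) (by simpa using hx2)
      (by rw [show -x.2 - -y.2 = -(x.2 - y.2) by ring, abs_neg]; exact hd2)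
  · rw [Real.dist_eq]
    simp only [B]
    exact key x.1 y.1 hx1 hd1

lemma Fv_norm_le {f g : ℝ → ℝ} {Kf Kg : NNReal} (hf : LipschitzWith Kf f)
    (hg : LipschitzWith Kg g) {R : ℝ} (hR : 0 < R) {x : ℝ × ℝ} (hx : ‖x‖ < R) :
    ‖Fv f g x‖ ≤ (|f 0| + Kf * (2 * R)) * ((|g 0| + 4 * Kg * R) * R) := by
  have hball : Metric.closedBall (0 : ℝ × ℝ) R ∈ nhds x :=
    Metric.closedBall_mem_nhds_of_mem (Metric.mem_ball.mpr (by rwa [dist_zero_right]))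
  have hlip := B_lipschitzOnWith hg hR.le
  have hfd : ‖fderiv ℝ (B g) x‖ ≤ (|g 0| + 4 * Kg * R) := by
    have := norm_fderiv_le_of_lipschitzOn ℝ hball hlip
    rwa [Real.coe_toNNReal _ (by positivity)] at this
  have hDx : ‖fderiv ℝ (B g) x x‖ ≤ (|g 0| + 4 * Kg * R) * R := by
    calc ‖fderiv ℝ (B g) x x‖ ≤ ‖fderiv ℝ (B g) x‖ * ‖x‖ :=
          (fderiv ℝ (B g) x).le_opNorm x
      _ ≤ (|g 0| + 4 * Kg * R) * R := by
          apply mul_le_mul hfd hx.le (norm_nonneg _) (by positivity)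
  have hfx : |f (enorm2 x)| ≤ |f 0| + Kf * (2 * R) := by
    have h1 := abs_g_le hf (enorm2 x)
    have h2 : |enorm2 x| ≤ 2 * R := by
      rw [abs_of_nonneg (enorm2_nonneg x)]
      have h5 := enorm2_le x
      have h3 : |x.1| ≤ ‖x‖ := by rw [Prod.norm_def]; exact le_trans (le_max_left _ _) (le_of_eq rfl)
      have h4 : |x.2| ≤ ‖x‖ := by rw [Prod.norm_def]; exact le_trans (le_max_right _ _) (le_of_eq rfl)
      linarith
    calc |f (enorm2 x)| ≤ |f 0| + Kf * |enorm2 x| := h1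
      _ ≤ |f 0| + Kf * (2 * R) := by
          have := mul_le_mul_of_nonneg_left h2 (NNReal.coe_nonneg Kf); linarith
  calc ‖Fv f g x‖ = |f (enorm2 x)| * ‖fderiv ℝ (B g) x x‖ := by
        rw [Fv, norm_smul, Real.norm_eq_abs]
    _ ≤ (|f 0| + Kf * (2 * R)) * ((|g 0| + 4 * Kg * R) * R) := by
        apply mul_le_mul hfx hDx (norm_nonneg _) (by positivity)

lemma Fv_measurable (f g : ℝ → ℝ) (hf : Continuous f) : Measurable (Fv f g) := by
  have hD : ∀ x : ℝ × ℝ, fderiv ℝ (B g) x x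
      = x.1 • fderiv ℝ (B g) x (1, 0) + x.2 • fderiv ℝ (B g) x (0, 1) := by
    intro x
    rw [← _root_.map_smul, ← _root_.map_smul, ← map_add]
    congr 1
    ext <;> simp
  have h1 : Measurable fun x : ℝ × ℝ => fderiv ℝ (B g) x (1, 0) :=
    measurable_fderiv_apply_const ℝ (B g) (1, 0)
  have h2 : Measurable fun x : ℝ × ℝ => fderiv ℝ (B g) x (0, 1) :=
    measurable_fderiv_apply_const ℝ (B g) (0, 1)
  have hcont : Continuous fun x : ℝ × ℝ => f (enorm2 x) := by
    apply hf.comp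
    unfold enorm2
    fun_prop
  have hmeas : Measurable fun x : ℝ × ℝ =>
      f (enorm2 x) • (x.1 • fderiv ℝ (B g) x (1, 0) + x.2 • fderiv ℝ (B g) x (0, 1)) := by
    apply Measurable.smul hcont.measurable
    exact ((measurable_fst.smul h1).add (measurable_snd.smul h2))
  have heq : Fv f g = fun x =>
      f (enorm2 x) • (x.1 • fderiv ℝ (B g) x (1, 0) + x.2 • fderiv ℝ (B g) x (0, 1)) := by
    funext x; rw [Fv, hD]
  rw [heq]; exact hmeas

lemma clm_apply_pair (L : (ℝ × ℝ) →L[ℝ] ℝ) (a b : ℝ) :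
    L (a, b) = a * L (1, 0) + b * L (0, 1) := by
  have : (a, b) = a • ((1:ℝ), (0:ℝ)) + b • ((0:ℝ), (1:ℝ)) := by
    ext <;> simp
  rw [this, map_add, _root_.map_smul, _root_.map_smul, smul_eq_mul, smul_eq_mul]

end Stmt14Aux

open Stmt14Aux Real Set

/-- Let `f, g : ℝ → ℝ` be Lipschitz and set `v₀(x) = f(|x|) x⊥`, `b₀(x) = g(|x|) x⊥`
with `x⊥ = (−x₂, x₁)`.  Then `∂₁b₀·∇v₀² − ∂₂b₀·∇v₀¹ = 0` in the distributional sense;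
equivalently `div (v₀² ∂₁b₀ − v₀¹ ∂₂b₀) = 0` in `𝒟′(ℝ²)`, i.e. for every smooth
compactly supported test function `u`, `∫ (v₀² ∂₁b₀ − v₀¹ ∂₂b₀)·∇u = 0`. -/
theorem stmt14 (f g : ℝ → ℝ) (Kf Kg : NNReal)
    (hf : LipschitzWith Kf f) (hg : LipschitzWith Kg g)
    (v₀ b₀ : ℝ × ℝ → ℝ × ℝ)
    (hv₀ : v₀ = fun x => (f (enorm2 x) * (-x.2), f (enorm2 x) * x.1))
    (hb₀ : b₀ = fun x => (g (enorm2 x) * (-x.2), g (enorm2 x) * x.1)) :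
    ∀ u : ℝ × ℝ → ℝ, ContDiff ℝ (⊤ : ℕ∞) u → HasCompactSupport u →
      ∫ x : ℝ × ℝ,
        (((v₀ x).2 • fderiv ℝ b₀ x (1, 0) - (v₀ x).1 • fderiv ℝ b₀ x (0, 1)).1 * pd1 u x
          + ((v₀ x).2 • fderiv ℝ b₀ x (1, 0) - (v₀ x).1 • fderiv ℝ b₀ x (0, 1)).2 * pd2 u x)
        = 0 := by
  intro u hu hcu
  have hb₀' : b₀ = B g := by rw [hb₀]; rfl
  -- the integrand equals `G x := (Fv f g x).1 * pd1 u x + (Fv f g x).2 * pd2 u x`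
  set G : ℝ × ℝ → ℝ := fun x => (Fv f g x).1 * pd1 u x + (Fv f g x).2 * pd2 u x with hG
  have hint_eq : (fun x : ℝ × ℝ =>
      (((v₀ x).2 • fderiv ℝ b₀ x (1, 0) - (v₀ x).1 • fderiv ℝ b₀ x (0, 1)).1 * pd1 u x
        + ((v₀ x).2 • fderiv ℝ b₀ x (1, 0) - (v₀ x).1 • fderiv ℝ b₀ x (0, 1)).2 * pd2 u x))
      = G := by
    funext x
    have hpair : (v₀ x).2 • fderiv ℝ b₀ x (1, 0) - (v₀ x).1 • fderiv ℝ b₀ x (0, 1)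
        = Fv f g x := by
      have hD : fderiv ℝ (B g) x x
          = x.1 • fderiv ℝ (B g) x (1, 0) + x.2 • fderiv ℝ (B g) x (0, 1) := by
        rw [← _root_.map_smul, ← _root_.map_smul, ← map_add]
        congr 1
        ext <;> simp
      rw [hb₀', hv₀, Fv, hD]
      dsimp only
      module
    rw [hpair]
  rw [hint_eq]
  -- pass to polar coordinates
  rw [← integral_comp_polarCoord_symm G]
  have htarget : polarCoord.target = Ioi (0:ℝ) ×ˢ Ioo (-π) π := rfl
  -- bounds
  obtain ⟨R, hR0, hRsupp⟩ := hcu.isCompact.isBounded.subset_closedBall_lt 0 0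
  have hfd_cont : Continuous (fderiv ℝ u) := (hu.continuous_fderiv (by simp))
  obtain ⟨Mu, hMu⟩ := (hcu.fderiv ℝ).exists_bound_of_continuous hfd_cont
  have hMu0 : 0 ≤ Mu := le_trans (norm_nonneg _) (hMu 0)
  have hfdu_zero : ∀ y : ℝ × ℝ, ¬ y ∈ Metric.closedBall (0:ℝ×ℝ) R → fderiv ℝ u y = 0 := by
    intro y hy
    have : y ∉ tsupport u := fun hc => hy (hRsupp hc)
    exact Function.notMem_support.mp (fun hc => this (support_fderiv_subset (𝕜 := ℝ) hc))
  set RR : ℝ := 2 * R + 1 with hRR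
  have hRR0 : (0:ℝ) < RR := by positivity
  set MF : ℝ := (|f 0| + Kf * (2 * RR)) * ((|g 0| + 4 * Kg * RR) * RR) with hMF
  have hMF0 : 0 ≤ MF := by positivity
  set Cbig : ℝ := (2 * R) * (MF * (2 * Mu)) with hCbig
  have hCbig0 : 0 ≤ Cbig := by positivity
  -- pointwise bounds for the polar integrand
  set k : ℝ × ℝ → ℝ := fun p => p.1 • G (polarCoord.symm p) with hk
  have hsymm_apply : ∀ p : ℝ × ℝ, polarCoord.symm p = (p.1 * cos p.2, p.1 * sin p.2) :=
    fun p => rfl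
  have hsymm_norm_le : ∀ p : ℝ × ℝ, 0 < p.1 → ‖polarCoord.symm p‖ ≤ p.1 := by
    intro p hp
    rw [hsymm_apply, Prod.norm_def]
    apply max_le
    · rw [Real.norm_eq_abs, abs_mul]
      calc |p.1| * |cos p.2| ≤ |p.1| * 1 := by
            apply mul_le_mul_of_nonneg_left (abs_cos_le_one _) (abs_nonneg _)
        _ = p.1 := by rw [mul_one, abs_of_pos hp]
    · rw [Real.norm_eq_abs, abs_mul]
      calc |p.1| * |sin p.2| ≤ |p.1| * 1 := by
            apply mul_le_mul_of_nonneg_left (abs_sin_le_one _) (abs_nonneg _)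
        _ = p.1 := by rw [mul_one, abs_of_pos hp]
  have hsymm_norm_ge : ∀ p : ℝ × ℝ, 0 < p.1 → p.1 / 2 ≤ ‖polarCoord.symm p‖ := by
    intro p hp
    rw [hsymm_apply, Prod.norm_def]
    have h1 : |cos p.2| ≥ cos p.2 ^ 2 := by
      nlinarith [abs_cos_le_one p.2, abs_nonneg (cos p.2), sq_abs (cos p.2), le_abs_self (cos p.2)]
    have h2 : |sin p.2| ≥ sin p.2 ^ 2 := by
      nlinarith [abs_sin_le_one p.2, abs_nonneg (sin p.2), sq_abs (sin p.2), le_abs_self (sin p.2)]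
    have hpyth := sin_sq_add_cos_sq p.2
    have hsum : |p.1 * cos p.2| + |p.1 * sin p.2| ≥ p.1 := by
      rw [abs_mul, abs_mul, abs_of_pos hp]
      nlinarith
    have := le_max_left ‖p.1 * cos p.2‖ ‖p.1 * sin p.2‖
    have := le_max_right ‖p.1 * cos p.2‖ ‖p.1 * sin p.2‖
    simp only [Real.norm_eq_abs] at *
    rcases le_total |p.1 * cos p.2| |p.1 * sin p.2| with h | h
    · calc p.1 / 2 ≤ |p.1 * sin p.2| := by linarith
        _ ≤ max |p.1 * cos p.2| |p.1 * sin p.2| := le_max_right _ _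
    · calc p.1 / 2 ≤ |p.1 * cos p.2| := by linarith
        _ ≤ max |p.1 * cos p.2| |p.1 * sin p.2| := le_max_left _ _
  have hG_bound : ∀ y : ℝ × ℝ, ‖y‖ < RR → |G y| ≤ MF * (2 * Mu) := by
    intro y hy
    have hFv := Fv_norm_le hf hg hRR0 hy
    have h1 : |(Fv f g y).1| ≤ MF := by
      refine le_trans ?_ hFv
      rw [Prod.norm_def]
      exact le_trans (le_max_left ‖(Fv f g y).1‖ ‖(Fv f g y).2‖) (le_of_eq rfl)
    have h2 : |(Fv f g y).2| ≤ MF := by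
      refine le_trans ?_ hFv
      rw [Prod.norm_def]
      exact le_trans (le_max_right ‖(Fv f g y).1‖ ‖(Fv f g y).2‖) (le_of_eq rfl)
    have hp1 : |pd1 u y| ≤ Mu := by
      rw [pd1]
      calc |fderiv ℝ u y (1, 0)| ≤ ‖fderiv ℝ u y‖ * ‖((1:ℝ), (0:ℝ))‖ :=
            (fderiv ℝ u y).le_opNorm _
        _ ≤ Mu * 1 := by
            apply mul_le_mul (hMu y) _ (norm_nonneg _) hMu0
            rw [Prod.norm_def]; simp [Real.norm_eq_abs]
        _ = Mu := mul_one _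
    have hp2 : |pd2 u y| ≤ Mu := by
      rw [pd2]
      calc |fderiv ℝ u y (0, 1)| ≤ ‖fderiv ℝ u y‖ * ‖((0:ℝ), (1:ℝ))‖ :=
            (fderiv ℝ u y).le_opNorm _
        _ ≤ Mu * 1 := by
            apply mul_le_mul (hMu y) _ (norm_nonneg _) hMu0
            rw [Prod.norm_def]; simp [Real.norm_eq_abs]
        _ = Mu := mul_one _
    calc |G y| ≤ |(Fv f g y).1 * pd1 u y| + |(Fv f g y).2 * pd2 u y| := abs_add_le _ _
      _ = |(Fv f g y).1| * |pd1 u y| + |(Fv f g y).2| * |pd2 u y| := by rw [abs_mul, abs_mul]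
      _ ≤ MF * Mu + MF * Mu := by
          apply add_le_add
          · exact mul_le_mul h1 hp1 (abs_nonneg _) hMF0
          · exact mul_le_mul h2 hp2 (abs_nonneg _) hMF0
      _ = MF * (2 * Mu) := by ring
  have hG_zero : ∀ y : ℝ × ℝ, R < ‖y‖ → G y = 0 := by
    intro y hy
    have hz : fderiv ℝ u y = 0 := by
      apply hfdu_zero
      rw [Metric.mem_closedBall, dist_zero_right]
      exact not_le.mpr hy
    simp [hG, pd1, pd2, hz]
  -- measurability of `k`
  have hsymm_cont : Continuous (polarCoord.symm : ℝ × ℝ → ℝ × ℝ) := by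
    have : (polarCoord.symm : ℝ × ℝ → ℝ × ℝ) = fun p => (p.1 * cos p.2, p.1 * sin p.2) := rfl
    rw [this]; fun_prop
  have hG_meas : Measurable G := by
    have hFvm := Fv_measurable f g hf.continuous
    have hpd1 : Continuous (pd1 u) := hfd_cont.clm_apply continuous_const
    have hpd2 : Continuous (pd2 u) := hfd_cont.clm_apply continuous_const
    exact ((measurable_fst.comp hFvm).mul hpd1.measurable).add
      ((measurable_snd.comp hFvm).mul hpd2.measurable)
  have hk_meas : Measurable k := by
    apply Measurable.smul measurable_fst
    exact hG_meas.comp hsymm_cont.measurable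
  -- integrability of `k` on the target
  have htarget_meas : MeasurableSet (Ioi (0:ℝ) ×ˢ Ioo (-π) π) :=
    measurableSet_Ioi.prod measurableSet_Ioo
  have hbound_int : Integrable ((Ioc (0:ℝ) (2*R) ×ˢ Ioo (-π) π).indicator fun _ => Cbig)
      (volume : Measure (ℝ × ℝ)) := by
    rw [integrable_indicator_iff (measurableSet_Ioc.prod measurableSet_Ioo)]
    apply (integrableOn_const_iff (C := Cbig)).mpr
    right
    rw [Measure.volume_eq_prod, Measure.prod_prod]
    exact ENNReal.mul_lt_top (by simp [Real.volume_Ioc]; exact ENNReal.mul_lt_top (by simp) ENNReal.ofReal_lt_top) (by simp [Real.volume_Ioo])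
  have hk_int : IntegrableOn k (Ioi (0:ℝ) ×ˢ Ioo (-π) π) volume := by
    apply Integrable.mono' hbound_int.restrict hk_meas.aestronglyMeasurable
    rw [ae_restrict_iff' htarget_meas]
    apply Filter.Eventually.of_forall
    intro p hp
    have hp1 : 0 < p.1 := hp.1
    by_cases hcase : p.1 ≤ 2 * R
    · have hmem : p ∈ Ioc (0:ℝ) (2*R) ×ˢ Ioo (-π) π := ⟨⟨hp1, hcase⟩, hp.2⟩
      rw [Set.indicator_of_mem hmem]
      have hnorm : ‖polarCoord.symm p‖ < RR := by
        have := hsymm_norm_le p hp1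
        rw [hRR]; linarith
      have hGb := hG_bound (polarCoord.symm p) hnorm
      rw [hk]
      simp only [smul_eq_mul, Real.norm_eq_abs, abs_mul]
      calc |p.1| * |G (polarCoord.symm p)| ≤ (2*R) * (MF * (2*Mu)) := by
            apply mul_le_mul _ hGb (abs_nonneg _) (by positivity)
            rw [abs_of_pos hp1]; exact hcase
        _ = Cbig := rfl
    · have hnmem : p ∉ Ioc (0:ℝ) (2*R) ×ˢ Ioo (-π) π := by
        intro hc; exact hcase hc.1.2
      rw [Set.indicator_of_notMem hnmem]
      have hbig : R < ‖polarCoord.symm p‖ := by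
        have := hsymm_norm_ge p hp1
        push_neg at hcase
        linarith
      have hGz : G (polarCoord.symm p) = 0 := hG_zero _ hbig
      show ‖p.1 • G (polarCoord.symm p)‖ ≤ 0
      rw [hGz, smul_zero, norm_zero]
  -- Fubini
  rw [htarget]
  have hk_int' : IntegrableOn k (Ioi (0:ℝ) ×ˢ Ioo (-π) π) ((volume : Measure ℝ).prod volume) := by
    rwa [← Measure.volume_eq_prod]
  rw [Measure.volume_eq_prod, setIntegral_prod _ hk_int']
  -- inner integral vanishes for every `r > 0`
  have hinner : ∀ r ∈ Ioi (0:ℝ),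
      (∫ θ in Ioo (-π) π, (r, θ).1 • G (polarCoord.symm (r, θ))) = 0 := by
    intro r hr
    rw [mem_Ioi] at hr
    set t : ℝ := (Fv f g (r, 0)).2 with ht
    -- the curve `W`
    set W : ℝ → ℝ := fun θ => u (r * cos θ, r * sin θ) with hW
    set W' : ℝ → ℝ := fun θ => fderiv ℝ u (r * cos θ, r * sin θ) (-(r * sin θ), r * cos θ)
      with hW'
    have hFv_r0 : (Fv f g (r, 0)).1 = 0 := by
      have h := Fv_dot f g (r, 0)
      simp only [mul_zero, add_zero] at h
      have : (Fv f g (r, 0)).1 * r = 0 := by simpa using h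
      rcases mul_eq_zero.mp this with h' | h'
      · exact h'
      · exact absurd h' (ne_of_gt hr)
    have hkey : ∀ θ : ℝ, (r, θ).1 • G (polarCoord.symm (r, θ)) = t * W' θ := by
      intro θ
      have hx : polarCoord.symm (r, θ) = rot θ (r, 0) := by
        rw [hsymm_apply]
        simp only [rot_apply]
        ext <;> dsimp <;> ring
      have hFv : Fv f g (polarCoord.symm (r, θ)) = (- sin θ * t, cos θ * t) := by
        rw [hx, Fv_rot]
        have : Fv f g (r, 0) = (0, t) := by
          ext
          · exact hFv_r0
          · rfl
        rw [this]
        simp only [rot_apply]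
        ext <;> dsimp <;> ring
      have hWexp : W' θ = -(r * sin θ) * pd1 u (polarCoord.symm (r, θ))
          + (r * cos θ) * pd2 u (polarCoord.symm (r, θ)) := by
        rw [hW', pd1, pd2, hsymm_apply]
        exact clm_apply_pair _ _ _
      simp only [hG, hFv, smul_eq_mul]
      rw [hWexp]
      ring
    have hWderiv : ∀ θ ∈ uIcc (-π) π, HasDerivAt W (W' θ) θ := by
      intro θ _
      have hc : HasDerivAt (fun θ : ℝ => r * cos θ) (-(r * sin θ)) θ := by
        simpa [mul_comm, mul_neg] using (Real.hasDerivAt_cos θ).const_mul r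
      have hs : HasDerivAt (fun θ : ℝ => r * sin θ) (r * cos θ) θ := by
        simpa [mul_comm] using (Real.hasDerivAt_sin θ).const_mul r
      have hγ : HasDerivAt (fun θ : ℝ => ((r * cos θ, r * sin θ) : ℝ × ℝ))
          (-(r * sin θ), r * cos θ) θ := hc.prodMk hs
      have hud : HasFDerivAt u (fderiv ℝ u (r * cos θ, r * sin θ)) (r * cos θ, r * sin θ) :=
        (hu.differentiable (by simp) (r * cos θ, r * sin θ)).hasFDerivAt
      exact hud.comp_hasDerivAt θ hγ
    have hW'cont : Continuous W' := by
      apply Continuous.clm_apply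
      · exact hfd_cont.comp (by fun_prop)
      · fun_prop
    have hFTC : ∫ θ in (-π)..π, W' θ = W π - W (-π) :=
      intervalIntegral.integral_eq_sub_of_hasDerivAt hWderiv
        (hW'cont.intervalIntegrable _ _)
    have hWval : W π - W (-π) = 0 := by
      rw [hW]
      simp [Real.cos_pi, Real.sin_pi]
    have hIoo : ∫ θ in Ioo (-π) π, W' θ = 0 := by
      rw [← MeasureTheory.integral_Ioc_eq_integral_Ioo,
        ← intervalIntegral.integral_of_le (by linarith [Real.pi_pos])]
      rw [hFTC, hWval]
    calc (∫ θ in Ioo (-π) π, (r, θ).1 • G (polarCoord.symm (r, θ)))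
        = ∫ θ in Ioo (-π) π, t * W' θ := by
          apply setIntegral_congr_fun measurableSet_Ioo
          intro θ _
          exact hkey θ
      _ = t * ∫ θ in Ioo (-π) π, W' θ := by rw [MeasureTheory.integral_const_mul]
      _ = 0 := by rw [hIoo, mul_zero]
  calc (∫ r in Ioi (0:ℝ), ∫ θ in Ioo (-π) π, k (r, θ))
      = ∫ r in Ioi (0:ℝ), (0:ℝ) := by
        apply setIntegral_congr_fun measurableSet_Ioi
        intro r hr
        exact hinner r hr
    _ = 0 := integral_zero _ _
end
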